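/- arXiv:1612.01869 — 3 statements merged into one kernel-verified Lean document; each statement's English description precedes it below -/
import Mathlib

section
/- Let L̃ be the generator of the triad model: L̃f = (B̃(x,x) + C̃x)·∇f + (σ̃²/2)Λ̃ : ∇²f, where B̃(x,x) = (B̃₁x₂x₃, B̃₂x₁x₃, B̃₃x₁x₂)^T, C̃ = L̃−Λ̃, and Λ̃ = −(C̃ + C̃^T)/2. Then for every n ≥ 1, L̃ⁿx is a vector of polynomials in x of total degree at most n+1. Moreover, for every multi-index α with |α| odd, the coefficient of x^α in L̃ⁿx depends on (B̃₁, B̃₂, B̃₃) only through the quadratic combinations B̃ᵢB̃ⱼ (i.e., it is invariant under (B̃₁,B̃₂,B̃₃) ↦ (−B̃₁,−B̃₂,−B̃₃)). -/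
/-!
On polynomials the generator is the operator `p ↦ ∑ₗ vₗ ∂ₗp + ∑ₗₘ Aₗₘ ∂ₘ∂ₗp` with quadratic drift
`v = B̃(x,x) + C̃x` and constant diffusion `A = (σ̃²/2) Λ̃`, so `L̃ⁿxᵢ` is this operator iterated on
`Xᵢ`, and each application raises the total degree by at most one.

For the parity statement substitute `x ↦ -x`. It anticommutes with every `∂ₗ`; the quadratic part
of the drift is even and the linear part odd, so the substitution intertwines the operator for `B̃`
with the one for `-B̃`. Hence `(L̃_{-B̃}ⁿ xᵢ)(x) = -(L̃_{B̃}ⁿ xᵢ)(-x)`, and the two polynomials have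
the same coefficients in odd total degree.
-/

open Matrix

namespace MvPolynomial

section Calculus

variable {𝕜 σ : Type*} [NontriviallyNormedField 𝕜] [Fintype σ]

theorem hasFDerivAt_eval (p : MvPolynomial σ 𝕜) (x : σ → 𝕜) :
    HasFDerivAt (fun y => eval y p)
      (∑ i, eval x (pderiv i p) • ContinuousLinearMap.proj (R := 𝕜) (φ := fun _ : σ => 𝕜) i) x := by
  classical
  induction p using MvPolynomial.induction_on with
  | C a =>
    simp only [eval_C]
    refine (hasFDerivAt_const (𝕜 := 𝕜) a x).congr_fderiv ?_
    ext v
    simp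
  | add p q hp hq =>
    simp only [eval_add]
    refine (hp.add hq).congr_fderiv ?_
    ext v
    simp [add_mul, Finset.sum_add_distrib]
  | mul_X p i hp =>
    simp only [eval_mul, eval_X]
    refine (hp.mul (hasFDerivAt_apply i x)).congr_fderiv ?_
    ext v
    simp [pderiv_X, Pi.single_apply, mul_add, Finset.sum_add_distrib, Finset.mul_sum,
      apply_ite (eval x), mul_comm, mul_left_comm]

theorem fderiv_eval_apply_single [DecidableEq σ] (p : MvPolynomial σ 𝕜) (x : σ → 𝕜) (i : σ) :
    fderiv 𝕜 (fun y => eval y p) x (Pi.single i 1) = eval x (pderiv i p) := by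
  simp [(hasFDerivAt_eval p x).fderiv, Pi.single_apply]

end Calculus

theorem totalDegree_pderiv_le {σ R : Type*} [CommRing R] (i : σ) (p : MvPolynomial σ R) :
    (pderiv i p).totalDegree ≤ p.totalDegree - 1 := by
  refine Finset.sup_le fun m hm => ?_
  rw [mem_support_iff, coeff_pderiv] at hm
  have hle := le_totalDegree (mem_support_iff.mpr (left_ne_zero_of_mul hm))
  rw [Finsupp.sum_add_index' (fun _ => rfl) (fun _ _ _ => rfl),
    Finsupp.sum_single_index rfl] at hle
  omega

section NegVars

variable {σ R : Type*} [CommRing R]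

noncomputable def negVars : MvPolynomial σ R →ₐ[R] MvPolynomial σ R :=
  aeval fun i => -X i

@[simp]
theorem negVars_X (i : σ) : negVars (X i : MvPolynomial σ R) = -X i :=
  aeval_X _ _

theorem pderiv_negVars (i : σ) (p : MvPolynomial σ R) :
    pderiv i (negVars p) = -negVars (pderiv i p) := by
  classical
  induction p using MvPolynomial.induction_on with
  | C a => simp
  | add p q hp hq => simp [hp, hq, add_comm]
  | mul_X p j hp =>
    simp only [map_mul, negVars_X, Derivation.leibniz, map_neg, pderiv_X, hp, map_add, smul_eq_mul]
    rcases eq_or_ne i j with rfl | hij <;> simp [*]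
    ring

theorem negVars_monomial [Fintype σ] (s : σ →₀ ℕ) (a : R) :
    negVars (monomial s a) = monomial s ((-1) ^ (∑ i, s i) * a) := by
  rw [negVars, aeval_monomial, Finsupp.prod_pow, monomial_eq, Finsupp.prod_pow]
  simp_rw [neg_pow (X _ : MvPolynomial σ R), Finset.prod_mul_distrib, Finset.prod_pow_eq_pow_sum,
    C_mul, map_pow, map_neg, map_one, algebraMap_eq]
  ring

theorem coeff_negVars [Fintype σ] (p : MvPolynomial σ R) (m : σ →₀ ℕ) :
    (negVars p).coeff m = (-1) ^ (∑ i, m i) * p.coeff m := by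
  classical
  induction p using MvPolynomial.induction_on' with
  | monomial s a =>
    rw [negVars_monomial, coeff_monomial, coeff_monomial]
    split_ifs with h <;> simp [h]
  | add p q hp hq => simp [hp, hq, mul_add]

end NegVars

section SecondOrderDiffOp

variable {σ R : Type*} [Fintype σ] [CommRing R]

noncomputable def secondOrderDiffOp (v : σ → MvPolynomial σ R) (A : Matrix σ σ R) :
    Module.End R (MvPolynomial σ R) :=
  ∑ l, LinearMap.mulLeft R (v l) ∘ₗ (pderiv l).toLinearMap +
    ∑ l, ∑ m, A l m • ((pderiv m).toLinearMap ∘ₗ (pderiv l).toLinearMap)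

variable {v w : σ → MvPolynomial σ R} {A : Matrix σ σ R}

theorem secondOrderDiffOp_apply (p : MvPolynomial σ R) :
    secondOrderDiffOp v A p =
      ∑ l, v l * pderiv l p + ∑ l, ∑ m, A l m • pderiv m (pderiv l p) := by
  simp [secondOrderDiffOp]

theorem totalDegree_secondOrderDiffOp_le (hv : ∀ l, (v l).totalDegree ≤ 2)
    {p : MvPolynomial σ R} {d : ℕ} (hp : p.totalDegree ≤ d + 1) :
    (secondOrderDiffOp v A p).totalDegree ≤ d + 2 := by
  have hd : ∀ l, (pderiv l p).totalDegree ≤ d := fun l =>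
    (totalDegree_pderiv_le l p).trans (by omega)
  rw [secondOrderDiffOp_apply]
  refine (totalDegree_add _ _).trans (max_le ?_ ?_)
  · refine totalDegree_finsetSum_le fun l _ => (totalDegree_mul _ _).trans ?_
    linarith [hv l, hd l]
  · refine totalDegree_finsetSum_le fun l _ => totalDegree_finsetSum_le fun m _ =>
      (totalDegree_smul_le _ _).trans ?_
    have := totalDegree_pderiv_le m (pderiv l p)
    have := hd l
    omega

theorem totalDegree_iterate_secondOrderDiffOp_X_le [Nontrivial R] (hv : ∀ l, (v l).totalDegree ≤ 2)
    (n : ℕ) (i : σ) : ((secondOrderDiffOp v A)^[n] (X i)).totalDegree ≤ n + 1 := by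
  induction n with
  | zero => simp
  | succ n ih =>
    rw [Function.iterate_succ_apply']
    exact totalDegree_secondOrderDiffOp_le hv ih

theorem negVars_secondOrderDiffOp (h : ∀ l, negVars (v l) = -w l) :
    Function.Semiconj negVars (secondOrderDiffOp v A) (secondOrderDiffOp w A) := fun p => by
  simp [secondOrderDiffOp_apply, pderiv_negVars, h]

theorem coeff_iterate_secondOrderDiffOp_X_of_odd (h : ∀ l, negVars (v l) = -w l) (n : ℕ) (i : σ)
    {m : σ →₀ ℕ} (hm : Odd (∑ l, m l)) :
    ((secondOrderDiffOp w A)^[n] (X i)).coeff m = ((secondOrderDiffOp v A)^[n] (X i)).coeff m := by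
  have hflip :
      (secondOrderDiffOp w A)^[n] (X i) = -negVars ((secondOrderDiffOp v A)^[n] (X i)) := by
    rw [(negVars_secondOrderDiffOp h).iterate_right n (X i), negVars_X, iterate_map_neg, neg_neg]
  rw [hflip, coeff_neg, coeff_negVars, hm.neg_one_pow, neg_one_mul, neg_neg]

theorem eval_secondOrderDiffOp {𝕜 : Type*} [NontriviallyNormedField 𝕜] [DecidableEq σ]
    (v : σ → MvPolynomial σ 𝕜) (A : Matrix σ σ 𝕜) (p : MvPolynomial σ 𝕜) (x : σ → 𝕜) :
    eval x (secondOrderDiffOp v A p) =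
      ∑ l, eval x (v l) * fderiv 𝕜 (fun y => eval y p) x (Pi.single l 1) +
        ∑ l, ∑ m, A l m *
          fderiv 𝕜 (fun y => fderiv 𝕜 (fun z => eval z p) y (Pi.single l 1)) x (Pi.single m 1) := by
  simp [secondOrderDiffOp_apply, fderiv_eval_apply_single]

end SecondOrderDiffOp

section Triad

variable {R : Type*} [CommRing R] (Ct : Matrix (Fin 3) (Fin 3) R) (b₁ b₂ b₃ : R)

noncomputable def triadDrift : Fin 3 → MvPolynomial (Fin 3) R :=
  fun l => ![C b₁ * X 1 * X 2, C b₂ * X 0 * X 2, C b₃ * X 0 * X 1] l + ∑ j, C (Ct l j) * X j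

theorem eval_triadDrift (x : Fin 3 → R) (l : Fin 3) :
    eval x (triadDrift Ct b₁ b₂ b₃ l) =
      ![b₁ * x 1 * x 2, b₂ * x 0 * x 2, b₃ * x 0 * x 1] l + Ct.mulVec x l := by
  fin_cases l <;> simp [triadDrift, Matrix.mulVec, dotProduct]

theorem totalDegree_triadDrift_le [Nontrivial R] (l : Fin 3) :
    (triadDrift Ct b₁ b₂ b₃ l).totalDegree ≤ 2 := by
  have hCX : ∀ (b : R) (j : Fin 3), (C b * X j : MvPolynomial (Fin 3) R).totalDegree ≤ 1 :=
    fun b j => (totalDegree_mul _ _).trans (by simp)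
  have hquad : ∀ (b : R) (j k : Fin 3),
      (C b * X j * X k : MvPolynomial (Fin 3) R).totalDegree ≤ 2 :=
    fun b j k => (totalDegree_mul _ _).trans <| by simpa using hCX b j
  refine (totalDegree_add _ _).trans (max_le ?_ ?_)
  · fin_cases l
    exacts [hquad _ _ _, hquad _ _ _, hquad _ _ _]
  · exact totalDegree_finsetSum_le fun j _ => (hCX _ j).trans one_le_two

theorem negVars_triadDrift (l : Fin 3) :
    negVars (triadDrift Ct b₁ b₂ b₃ l) = -triadDrift Ct (-b₁) (-b₂) (-b₃) l := by
  fin_cases l <;> simp [triadDrift] <;> ring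

end Triad

end MvPolynomial

open MvPolynomial

/-- Structural lemma for the triad generator: for every `n ≥ 1`, `L̃ⁿx` is a vector
of polynomials of total degree at most `n+1`, and for every multi-index `α` with
`|α|` odd, the coefficient of `x^α` is invariant under
`(B̃₁,B̃₂,B̃₃) ↦ (−B̃₁,−B̃₂,−B̃₃)` (it depends on the `B̃ᵢ` only through products
`B̃ᵢB̃ⱼ`).  Here `C̃ = L̃ − Λ̃` and `Λ̃ = −(C̃ + C̃ᵀ)/2`. -/
theorem triad_generator_polynomial_structure
    (σt : ℝ) (Ct : Matrix (Fin 3) (Fin 3) ℝ) :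
    let Λt : Matrix (Fin 3) (Fin 3) ℝ := -((2:ℝ)⁻¹) • (Ct + Ctᵀ)
    let gen : ℝ → ℝ → ℝ → ((Fin 3 → ℝ) → ℝ) → ((Fin 3 → ℝ) → ℝ) :=
      fun b₁ b₂ b₃ f x =>
        (∑ l, ((![b₁ * x 1 * x 2, b₂ * x 0 * x 2, b₃ * x 0 * x 1] : Fin 3 → ℝ) l
                + Ct.mulVec x l) * fderiv ℝ f x (Pi.single l 1))
        + (σt ^ 2 / 2) * ∑ l, ∑ m, Λt l m *
            fderiv ℝ (fun y => fderiv ℝ f y (Pi.single l 1)) x (Pi.single m 1)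
    ∀ (b₁ b₂ b₃ : ℝ) (n : ℕ), 1 ≤ n → ∀ i : Fin 3,
      ∃ P Q : MvPolynomial (Fin 3) ℝ,
        P.totalDegree ≤ n + 1 ∧ Q.totalDegree ≤ n + 1 ∧
        (∀ x : Fin 3 → ℝ, (gen b₁ b₂ b₃)^[n] (fun y => y i) x = MvPolynomial.eval x P) ∧
        (∀ x : Fin 3 → ℝ, (gen (-b₁) (-b₂) (-b₃))^[n] (fun y => y i) x = MvPolynomial.eval x Q) ∧
        (∀ α : Fin 3 →₀ ℕ, Odd (∑ l, α l) → P.coeff α = Q.coeff α) := by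
  intro Λt gen b₁ b₂ b₃ n _ i
  have hgen (c₁ c₂ c₃ : ℝ) : Function.Semiconj (fun p y => eval y p)
      (secondOrderDiffOp (triadDrift Ct c₁ c₂ c₃) ((σt ^ 2 / 2) • Λt)) (gen c₁ c₂ c₃) :=
    fun p => funext fun x => by
      simp only [gen, eval_secondOrderDiffOp, eval_triadDrift, Matrix.smul_apply, smul_eq_mul,
        Finset.mul_sum, mul_assoc]
  have hXi : (fun y : Fin 3 → ℝ => y i) = fun y => eval y (X i) := by simp
  refine ⟨_, _,
    totalDegree_iterate_secondOrderDiffOp_X_le (totalDegree_triadDrift_le Ct b₁ b₂ b₃) n i,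
    totalDegree_iterate_secondOrderDiffOp_X_le (totalDegree_triadDrift_le Ct _ _ _) n i,
    fun x => by rw [hXi, ← (hgen b₁ b₂ b₃).iterate_right n],
    fun x => by rw [hXi, ← (hgen (-b₁) (-b₂) (-b₃)).iterate_right n],
    fun α hα =>
      (coeff_iterate_secondOrderDiffOp_X_of_odd (negVars_triadDrift Ct b₁ b₂ b₃) n i hα).symm⟩
end

section
/- With the triad generator L̃ and Gaussian equilibrium density p ∝ exp(−|x|²/(2σ_eq²)), for every i ≥ 0 the quantity k̂^{(i)}(0) = σ_eq⁻² E_p[(L̃ⁱ x) x^T] is invariant under the sign change (B̃₁,B̃₂,B̃₃) ↦ (−B̃₁,−B̃₂,−B̃₃). Consequently the parameters B̃ᵢ cannot be uniquely identified from the family {k̂^{(i)}(0)}_{i≥0}. -/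
/-!
Write `R f (x) = -f (-x)`. Conjugating a drift–diffusion generator by `R` keeps its
second-order part and replaces the drift `F` by `x ↦ -F (-x)`; for the triad drift (quadratic
nonlinearity plus the linear part `C x`) this is exactly the sign change of `(b₁, b₂, b₃)`.
Coordinate functions are fixed by `R`, so the iterates of the two generators on `x ↦ x j` differ
by `R`, and since `x ↦ x l · p x` is odd, the substitution `x ↦ -x` in the Gaussian expectation
turns one statistic into the other.
-/

open Matrix MeasureTheory

theorem fderiv_comp_neg {𝕜 E F : Type*} [NontriviallyNormedField 𝕜] [NormedAddCommGroup E]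
    [NormedSpace 𝕜 E] [NormedAddCommGroup F] [NormedSpace 𝕜 F] (f : E → F) (x : E) :
    fderiv 𝕜 (fun y => f (-y)) x = -fderiv 𝕜 f (-x) := by
  simpa using fderiv_comp_smul (f := f) (x := x) (-1 : 𝕜)

section Generator

variable {ι : Type*} [Fintype ι] [DecidableEq ι]

noncomputable def driftDiffusionGenerator (F : (ι → ℝ) → ι → ℝ) (c : ℝ) (Λ : Matrix ι ι ℝ)
    (f : (ι → ℝ) → ℝ) (x : ι → ℝ) : ℝ :=
  (∑ l, F x l * fderiv ℝ f x (Pi.single l 1))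
    + c * ∑ l, ∑ m, Λ l m * fderiv ℝ (fun y => fderiv ℝ f y (Pi.single l 1)) x (Pi.single m 1)

theorem driftDiffusionGenerator_semiconj_reflect (F : (ι → ℝ) → ι → ℝ) (c : ℝ)
    (Λ : Matrix ι ι ℝ) :
    Function.Semiconj (fun f x => -f (-x))
      (driftDiffusionGenerator (fun x => -F (-x)) c Λ) (driftDiffusionGenerator F c Λ) := by
  intro f
  ext x
  have first_order : ∀ (g : (ι → ℝ) → ℝ) y v,
      fderiv ℝ (fun z => -g (-z)) y v = fderiv ℝ g (-y) v := by
    intro g y v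
    simp [fderiv_fun_neg, fderiv_comp_neg]
  have second_order : ∀ l m : ι, fderiv ℝ (fun y => fderiv ℝ f (-y) (Pi.single l 1)) x (Pi.single m 1)
      = -fderiv ℝ (fun y => fderiv ℝ f y (Pi.single l 1)) (-x) (Pi.single m 1) := by
    intro l m
    rw [fderiv_comp_neg (fun y => fderiv ℝ f y (Pi.single l 1))]
    rfl
  simp only [driftDiffusionGenerator, first_order, second_order, neg_neg, Pi.neg_apply, neg_mul, mul_neg,
    Finset.sum_neg_distrib]
  ring

theorem driftDiffusionGenerator_iterate_coord (F : (ι → ℝ) → ι → ℝ) (c : ℝ) (Λ : Matrix ι ι ℝ)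
    (i : ℕ) (j : ι) (x : ι → ℝ) :
    (driftDiffusionGenerator F c Λ)^[i] (fun y => y j) x
      = -(driftDiffusionGenerator (fun y => -F (-y)) c Λ)^[i] (fun y => y j) (-x) := by
  have h := congrFun ((driftDiffusionGenerator_semiconj_reflect F c Λ).iterate_right i
    (fun y => y j)) x
  simp only [Pi.neg_apply, neg_neg] at h
  exact h.symm

end Generator

def triadDrift (C : Matrix (Fin 3) (Fin 3) ℝ) (b₁ b₂ b₃ : ℝ) (x : Fin 3 → ℝ) : Fin 3 → ℝ :=
  ![b₁ * x 1 * x 2, b₂ * x 0 * x 2, b₃ * x 0 * x 1] + C *ᵥ x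

theorem triadDrift_reflect (C : Matrix (Fin 3) (Fin 3) ℝ) (b₁ b₂ b₃ : ℝ) :
    (fun x => -triadDrift C b₁ b₂ b₃ (-x)) = triadDrift C (-b₁) (-b₂) (-b₃) := by
  ext x k
  simp only [triadDrift, Pi.add_apply, Pi.neg_apply, mulVec_neg, neg_add, neg_neg]
  congr 1
  fin_cases k <;> simp

theorem integral_neg_comp_neg_mul_odd_mul_even {E : Type*} [MeasurableSpace E] [AddGroup E]
    [MeasurableNeg E] (μ : Measure E) [μ.IsNegInvariant] (g φ ψ : E → ℝ)
    (hφ : ∀ x, φ (-x) = -φ x) (hψ : ∀ x, ψ (-x) = ψ x) :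
    ∫ x, -g (-x) * φ x * ψ x ∂μ = ∫ x, g x * φ x * ψ x ∂μ := by
  rw [← integral_neg_eq_self]
  simp [hφ, hψ]

theorem triad_nonidentifiability_general
    (σeq σt : ℝ)
    (Lmat Λmat : Matrix (Fin 3) (Fin 3) ℝ) :
    let Ct : Matrix (Fin 3) (Fin 3) ℝ := Lmat - Λmat
    let gen : ℝ → ℝ → ℝ → ((Fin 3 → ℝ) → ℝ) → ((Fin 3 → ℝ) → ℝ) :=
      fun b₁ b₂ b₃ f x =>
        (∑ l, ((![b₁ * x 1 * x 2, b₂ * x 0 * x 2, b₃ * x 0 * x 1] : Fin 3 → ℝ) l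
                + Ct.mulVec x l) * fderiv ℝ f x (Pi.single l 1))
        + (σt ^ 2 / 2) * ∑ l, ∑ m, Λmat l m *
            fderiv ℝ (fun y => fderiv ℝ f y (Pi.single l 1)) x (Pi.single m 1)
    let p : (Fin 3 → ℝ) → ℝ :=
      fun x => ((2 * Real.pi * σeq ^ 2) ^ ((3:ℝ)/2))⁻¹ *
        Real.exp (-(∑ k, (x k) ^ 2) / (2 * σeq ^ 2))
    let stat : ℝ → ℝ → ℝ → ℕ → Matrix (Fin 3) (Fin 3) ℝ :=
      fun b₁ b₂ b₃ i => Matrix.of fun j l =>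
        σeq⁻¹ ^ 2 * ∫ x : Fin 3 → ℝ, (gen b₁ b₂ b₃)^[i] (fun y => y j) x * x l * p x
    ∀ b₁ b₂ b₃ : ℝ,
      (∀ i : ℕ, stat (-b₁) (-b₂) (-b₃) i = stat b₁ b₂ b₃ i) ∧
      ((b₁, b₂, b₃) ≠ (0, 0, 0) →
        ∃ b' : ℝ × ℝ × ℝ, b' ≠ (b₁, b₂, b₃) ∧
          ∀ i : ℕ, stat b'.1 b'.2.1 b'.2.2 i = stat b₁ b₂ b₃ i) := by
  intro Ct gen p stat b₁ b₂ b₃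
  have hp_even : ∀ x, p (-x) = p x := fun x => by simp [p]
  have hgen_def : gen = fun b₁ b₂ b₃ =>
      driftDiffusionGenerator (triadDrift Ct b₁ b₂ b₃) (σt ^ 2 / 2) Λmat := rfl
  have hsym : ∀ i, stat (-b₁) (-b₂) (-b₃) i = stat b₁ b₂ b₃ i := by
    intro i
    ext j l
    have hgen : ∀ x, (gen (-b₁) (-b₂) (-b₃))^[i] (fun y => y j) x
        = -(gen b₁ b₂ b₃)^[i] (fun y => y j) (-x) := fun x => by
      simpa only [hgen_def, triadDrift_reflect, neg_neg] using
        driftDiffusionGenerator_iterate_coord (triadDrift Ct (-b₁) (-b₂) (-b₃)) _ Λmat i j x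
    simp only [stat, Matrix.of_apply, hgen]
    congr 1
    exact integral_neg_comp_neg_mul_odd_mul_even volume _ _ p (fun x => rfl) hp_even
  refine ⟨hsym, fun hne => ⟨(-b₁, -b₂, -b₃), fun h => hne ?_, hsym⟩⟩
  simp only [Prod.mk.injEq] at h ⊢
  exact ⟨by linarith [h.1], by linarith [h.2.1], by linarith [h.2.2]⟩

/-- The essential statistics `k̂⁽ⁱ⁾(0) = σ_eq⁻² E_p[(L̃ⁱx) xᵀ]` of the triad model
are invariant under `(B̃₁,B̃₂,B̃₃) ↦ (−B̃₁,−B̃₂,−B̃₃)`; consequently, the parameters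
`B̃ᵢ` cannot be uniquely identified from the family `{k̂⁽ⁱ⁾(0)}ᵢ`. -/
theorem triad_nonidentifiability
    (σeq σt : ℝ) (hσ : 0 < σeq)
    (Lmat Λmat : Matrix (Fin 3) (Fin 3) ℝ) :
    let Ct : Matrix (Fin 3) (Fin 3) ℝ := Lmat - Λmat
    let gen : ℝ → ℝ → ℝ → ((Fin 3 → ℝ) → ℝ) → ((Fin 3 → ℝ) → ℝ) :=
      fun b₁ b₂ b₃ f x =>
        (∑ l, ((![b₁ * x 1 * x 2, b₂ * x 0 * x 2, b₃ * x 0 * x 1] : Fin 3 → ℝ) l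
                + Ct.mulVec x l) * fderiv ℝ f x (Pi.single l 1))
        + (σt ^ 2 / 2) * ∑ l, ∑ m, Λmat l m *
            fderiv ℝ (fun y => fderiv ℝ f y (Pi.single l 1)) x (Pi.single m 1)
    let p : (Fin 3 → ℝ) → ℝ :=
      fun x => ((2 * Real.pi * σeq ^ 2) ^ ((3:ℝ)/2))⁻¹ *
        Real.exp (-(∑ k, (x k) ^ 2) / (2 * σeq ^ 2))
    let stat : ℝ → ℝ → ℝ → ℕ → Matrix (Fin 3) (Fin 3) ℝ :=
      fun b₁ b₂ b₃ i => Matrix.of fun j l =>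
        σeq⁻¹ ^ 2 * ∫ x : Fin 3 → ℝ, (gen b₁ b₂ b₃)^[i] (fun y => y j) x * x l * p x
    ∀ b₁ b₂ b₃ : ℝ,
      (∀ i : ℕ, stat (-b₁) (-b₂) (-b₃) i = stat b₁ b₂ b₃ i) ∧
      ((b₁, b₂, b₃) ≠ (0, 0, 0) →
        ∃ b' : ℝ × ℝ × ℝ, b' ≠ (b₁, b₂, b₃) ∧
          ∀ i : ℕ, stat b'.1 b'.2.1 b'.2.2 i = stat b₁ b₂ b₃ i) :=
  triad_nonidentifiability_general σeq σt Lmat Λmat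
end

section
/- For the Langevin generator L̃f = v ∂f/∂x + (−U'(x) − γ̃v) ∂f/∂v + γ̃ k_BT̃ ∂²f/∂v² and A(x,v) = v, one has L̃³A = −v²U'''(x) + 2γ̃vU''(x) + U'(x)U''(x) − γ̃²U'(x) − γ̃³v (as a pointwise identity of smooth functions), and hence E_{p_eq}[(L̃³A)·v]/(k_BT̃) = 2γ̃ E_{p_eq}[U''(x)] − γ̃³. -/
open MeasureTheory

private lemma sq_exp_integrable {b : ℝ} (hb : 0 < b) :
    Integrable (fun x : ℝ => x ^ 2 * Real.exp (-b * x ^ 2)) := by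
  have h := integrable_rpow_mul_exp_neg_mul_sq hb (s := 2) (by norm_num)
  have h2 : ∀ x : ℝ, x ^ (2 : ℝ) = x ^ (2 : ℕ) := fun x => by
    rw [show (2 : ℝ) = ((2 : ℕ) : ℝ) by norm_num, Real.rpow_natCast]
  simpa [h2] using h

private lemma gauss_second_moment {b : ℝ} (hb : 0 < b) :
    ∫ x : ℝ, x ^ 2 * Real.exp (-b * x ^ 2)
      = (2 * b)⁻¹ * ∫ x : ℝ, Real.exp (-b * x ^ 2) := by
  have hd : ∀ x : ℝ, HasDerivAt (fun y : ℝ => y * Real.exp (-b * y ^ 2))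
      (Real.exp (-b * x ^ 2) - 2 * b * (x ^ 2 * Real.exp (-b * x ^ 2))) x := by
    intro x
    have h1 : HasDerivAt (fun y : ℝ => -b * y ^ 2) (-b * (2 * x)) x := by
      simpa using (hasDerivAt_pow 2 x).const_mul (-b)
    have h2 := (hasDerivAt_id x).mul h1.exp
    refine h2.congr_deriv ?_
    simp only [id_eq]
    ring
  have hint : Integrable (fun x : ℝ =>
      Real.exp (-b * x ^ 2) - 2 * b * (x ^ 2 * Real.exp (-b * x ^ 2))) :=
    (integrable_exp_neg_mul_sq hb).sub ((sq_exp_integrable hb).const_mul _)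
  have h0 := integral_eq_zero_of_hasDerivAt_of_integrable hd hint
    (integrable_mul_exp_neg_mul_sq hb)
  rw [integral_sub (integrable_exp_neg_mul_sq hb) ((sq_exp_integrable hb).const_mul _),
    integral_const_mul] at h0
  have hb' : (2 : ℝ) * b ≠ 0 := by positivity
  rw [inv_mul_eq_div, eq_div_iff hb']
  linear_combination -h0

private lemma extract_left {f g : ℝ → ℝ} (hf : Continuous f) (hg : Continuous g)
    (hgpos : ∀ v, 0 < g v) (hgint : 0 < ∫ v, g v)
    (h : Integrable (fun q : ℝ × ℝ => f q.1 * g q.2)) : Integrable f := by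
  rw [Measure.volume_eq_prod] at h
  have hmeas : AEStronglyMeasurable (fun q : ℝ × ℝ => f q.1 * g q.2)
      ((volume : Measure ℝ).prod volume) :=
    ((hf.comp continuous_fst).mul (hg.comp continuous_snd)).aestronglyMeasurable
  obtain ⟨-, h2⟩ := (integrable_prod_iff hmeas).mp h
  have heq : ∀ x : ℝ, (∫ v, ‖f x * g v‖) = ‖f x‖ * ∫ v, g v := by
    intro x
    have hnorm : ∀ v, ‖f x * g v‖ = ‖f x‖ * g v := fun v => by
      rw [norm_mul, Real.norm_of_nonneg (hgpos v).le]
    simp_rw [hnorm]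
    exact integral_const_mul _ _
  simp_rw [heq] at h2
  have h3 : Integrable (fun x => ‖f x‖) := by
    have h4 := h2.mul_const (∫ v, g v)⁻¹
    simpa [mul_assoc, mul_inv_cancel₀ hgint.ne'] using h4
  exact (integrable_norm_iff hf.aestronglyMeasurable).mp h3

/-- For the Langevin generator and `A(x,v) = v`, the pointwise identity
`L̃³A = −v²U''' + 2γ̃vU'' + U'U'' − γ̃²U' − γ̃³v` holds, and hence
`E[(L̃³A)v]/(k_BT̃) = 2γ̃E[U''] − γ̃³`. -/
theorem langevin_third_derivative_statistic
    (U : ℝ → ℝ) (hU : ContDiff ℝ (⊤ : ℕ∞) U) (γ kT : ℝ) (hγ : 0 < γ) (hkT : 0 < kT)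
    (Z : ℝ) (hZpos : 0 < Z)
    (hZ : (∫ q : ℝ × ℝ, Real.exp (-(U q.1 + q.2 ^ 2 / 2) / kT)) = Z) :
    let p : ℝ × ℝ → ℝ := fun q => Z⁻¹ * Real.exp (-(U q.1 + q.2 ^ 2 / 2) / kT)
    let Lop : (ℝ → ℝ → ℝ) → (ℝ → ℝ → ℝ) := fun f x v =>
      v * deriv (fun s => f s v) x + (-(deriv U x) - γ * v) * deriv (f x) v
        + γ * kT * deriv (deriv (f x)) v
    let A : ℝ → ℝ → ℝ := fun _ v => v
    Integrable (fun q : ℝ × ℝ => Lop (Lop (Lop A)) q.1 q.2 * q.2 * p q) →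
    Integrable (fun q : ℝ × ℝ => deriv (deriv U) q.1 * p q) →
    ((∀ x v : ℝ, Lop (Lop (Lop A)) x v
        = -v ^ 2 * deriv^[3] U x + 2 * γ * v * deriv^[2] U x
          + deriv U x * deriv^[2] U x - γ ^ 2 * deriv U x - γ ^ 3 * v) ∧
     (∫ q : ℝ × ℝ, Lop (Lop (Lop A)) q.1 q.2 * q.2 * p q) / kT
        = 2 * γ * (∫ q : ℝ × ℝ, deriv^[2] U q.1 * p q) - γ ^ 3) := by
  intro p Lop A hI hJ
  have hit2 : deriv^[2] U = deriv (deriv U) := rfl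
  have hit3 : deriv^[3] U = deriv (deriv (deriv U)) := rfl
  -- differentiability facts
  have hUn : ∀ n : ℕ, ContDiff ℝ (⊤ : ℕ∞) (deriv^[n] U) :=
    fun n => ContDiff.iterate_deriv n (hU.of_le (by simp))
  have h1 : ∀ x, DifferentiableAt ℝ (deriv U) x := by
    intro x
    have := ((hUn 1).differentiable (by simp)).differentiableAt (x := x)
    simpa using this
  have h2 : ∀ x, DifferentiableAt ℝ (deriv (deriv U)) x := by
    intro x
    have := ((hUn 2).differentiable (by simp)).differentiableAt (x := x)
    simpa [show deriv^[2] U = deriv (deriv U) from rfl] using this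
  -- First application: L A = -U' - γ v
  have sA : ∀ x v : ℝ, Lop A x v = -(deriv U x) - γ * v := by
    intro x v
    show v * deriv (fun _ : ℝ => v) x + (-(deriv U x) - γ * v) * deriv (fun w : ℝ => w) v
        + γ * kT * deriv (deriv (fun w : ℝ => w)) v = -(deriv U x) - γ * v
    have hid : deriv (fun w : ℝ => w) = fun _ => (1 : ℝ) := deriv_id''
    simp only [hid, deriv_const', deriv_const]
    ring
  have hA : Lop A = fun x v => -(deriv U x) - γ * v := funext fun x => funext fun v => sA x v
  -- Second application
  have sB : ∀ x v : ℝ, Lop (Lop A) x v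
      = -v * deriv (deriv U) x + γ * deriv U x + γ ^ 2 * v := by
    intro x v
    show v * deriv (fun s => Lop A s v) x + (-(deriv U x) - γ * v) * deriv (Lop A x) v
        + γ * kT * deriv (deriv (Lop A x)) v = _
    simp only [hA]
    have d1 : deriv (fun s => -(deriv U s) - γ * v) x = -(deriv (deriv U) x) :=
      (((h1 x).hasDerivAt).neg.sub_const (γ * v)).deriv
    have d2 : ∀ w : ℝ, HasDerivAt (fun w : ℝ => -(deriv U x) - γ * w) (0 - γ * 1) w :=
      fun w => (hasDerivAt_const w (-(deriv U x))).sub ((hasDerivAt_id' (𝕜 := ℝ) w).const_mul γ)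
    have d2' : deriv (fun w : ℝ => -(deriv U x) - γ * w) = fun _ => 0 - γ * 1 :=
      funext fun w => (d2 w).deriv
    rw [d1, (d2 v).deriv, d2', deriv_const]
    ring
  have hB : Lop (Lop A) = fun x v => -v * deriv (deriv U) x + γ * deriv U x + γ ^ 2 * v :=
    funext fun x => funext fun v => sB x v
  -- Third application
  have key : ∀ x v : ℝ, Lop (Lop (Lop A)) x v
      = -v ^ 2 * deriv (deriv (deriv U)) x + 2 * γ * v * deriv (deriv U) x
        + deriv U x * deriv (deriv U) x - γ ^ 2 * deriv U x - γ ^ 3 * v := by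
    intro x v
    show v * deriv (fun s => Lop (Lop A) s v) x
        + (-(deriv U x) - γ * v) * deriv (Lop (Lop A) x) v
        + γ * kT * deriv (deriv (Lop (Lop A) x)) v = _
    simp only [hB]
    have d1 : deriv (fun s => -v * deriv (deriv U) s + γ * deriv U s + γ ^ 2 * v) x
        = -v * deriv (deriv (deriv U)) x + γ * deriv (deriv U) x :=
      ((((h2 x).hasDerivAt.const_mul (-v)).add ((h1 x).hasDerivAt.const_mul γ)).add_const
        (γ ^ 2 * v)).deriv
    have d2 : ∀ w : ℝ, HasDerivAt (fun w : ℝ => -w * deriv (deriv U) x + γ * deriv U x + γ ^ 2 * w)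
        (-1 * deriv (deriv U) x + γ ^ 2 * 1) w := fun w =>
      (((hasDerivAt_id' (𝕜 := ℝ) w).neg.mul_const (deriv (deriv U) x)).add_const
        (γ * deriv U x)).add ((hasDerivAt_id' (𝕜 := ℝ) w).const_mul (γ ^ 2))
    have d2' : deriv (fun w : ℝ => -w * deriv (deriv U) x + γ * deriv U x + γ ^ 2 * w)
        = fun _ => -1 * deriv (deriv U) x + γ ^ 2 * 1 := funext fun w => (d2 w).deriv
    rw [d1, (d2 v).deriv, d2', deriv_const]
    ring
  refine ⟨by simpa [hit2, hit3] using key, ?_⟩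
  -- Integral part
  set E : ℝ → ℝ := fun x => Z⁻¹ * Real.exp (-U x / kT) with hE_def
  set G : ℝ → ℝ := fun v => Real.exp (-(2 * kT)⁻¹ * v ^ 2) with hG_def
  have hb : (0 : ℝ) < (2 * kT)⁻¹ := by positivity
  have hp : ∀ q : ℝ × ℝ, p q = E q.1 * G q.2 := by
    intro q
    show Z⁻¹ * Real.exp (-(U q.1 + q.2 ^ 2 / 2) / kT) = _
    simp only [hE_def, hG_def]
    rw [mul_assoc, ← Real.exp_add]
    congr 1
    field_simp
    ring
  have hpneg : ∀ q : ℝ × ℝ, p (q.1, -q.2) = p q := by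
    intro q
    show Z⁻¹ * Real.exp (-(U q.1 + (-q.2) ^ 2 / 2) / kT)
      = Z⁻¹ * Real.exp (-(U q.1 + q.2 ^ 2 / 2) / kT)
    rw [neg_sq]
  have hP : Integrable (fun q : ℝ × ℝ => Real.exp (-(U q.1 + q.2 ^ 2 / 2) / kT)) := by
    by_contra h
    rw [integral_undef h] at hZ
    exact hZpos.ne' hZ.symm
  have hpint : Integrable p := hP.const_mul Z⁻¹
  have hpEG : Integrable (fun q : ℝ × ℝ => E q.1 * G q.2) :=
    hpint.congr (Filter.Eventually.of_forall hp)
  have hEc : Continuous E :=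
    continuous_const.mul (Real.continuous_exp.comp (hU.continuous.neg.div_const kT))
  have hGc : Continuous G :=
    Real.continuous_exp.comp (continuous_const.mul (continuous_pow 2))
  have hGpos : ∀ v, 0 < G v := fun v => Real.exp_pos _
  have hU2c : Continuous (deriv (deriv U)) := (hUn 2).continuous
  have hcG : 0 < ∫ v, G v := by
    simp only [hG_def]
    rw [integral_gaussian]
    exact Real.sqrt_pos.mpr (div_pos Real.pi_pos hb)
  have hEint : Integrable E := extract_left hEc hGc hGpos hcG hpEG
  have hUEint : Integrable (fun x => deriv (deriv U) x * E x) := by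
    refine extract_left (hU2c.mul hEc) hGc hGpos hcG ?_
    exact hJ.congr (Filter.Eventually.of_forall fun q => by
      show deriv (deriv U) q.1 * p q = deriv (deriv U) q.1 * E q.1 * G q.2
      rw [hp q]; ring)
  -- symmetry step
  set T : ℝ × ℝ → ℝ × ℝ := fun q => (q.1, -q.2) with hT_def
  have hT : MeasurePreserving T volume volume := by
    rw [Measure.volume_eq_prod]
    exact (MeasurePreserving.id volume).prod (Measure.measurePreserving_neg volume)
  have hTemb : MeasurableEmbedding T :=
    (((MeasurableEquiv.refl ℝ).prodCongr (Homeomorph.neg ℝ).toMeasurableEquiv)).measurableEmbedding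
  set g : ℝ × ℝ → ℝ := fun q => Lop (Lop (Lop A)) q.1 q.2 * q.2 * p q with hg_def
  set F : ℝ × ℝ → ℝ := fun q =>
    (2 * γ * deriv (deriv U) q.1 - γ ^ 3) * (q.2 ^ 2 * p q) with hF_def
  have hsum : ∀ q : ℝ × ℝ, g q + g (T q) = 2 * F q := by
    intro q
    simp only [hg_def, hF_def, hT_def]
    rw [key q.1 q.2, key q.1 (-q.2), hpneg q]
    ring
  have hgTint : Integrable (fun q => g (T q)) := (hT.integrable_comp_emb hTemb).mpr hI
  have hIg : ∫ q, g q = ∫ q, F q := by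
    have hcomp : ∫ q, g (T q) = ∫ q, g q := hT.integral_comp hTemb g
    have hadd : ∫ q, (g q + g (T q)) = (∫ q, g q) + ∫ q, g (T q) := integral_add hI hgTint
    have h2F : ∫ q, (g q + g (T q)) = 2 * ∫ q, F q := by
      rw [integral_congr_ae (Filter.Eventually.of_forall hsum)]
      exact integral_const_mul 2 F
    linarith
  -- Fubini
  have hF2 : ∫ q, F q
      = (∫ x, (2 * γ * deriv (deriv U) x - γ ^ 3) * E x) * ∫ v, v ^ 2 * G v := by
    rw [integral_congr_ae (Filter.Eventually.of_forall
      (fun q : ℝ × ℝ => show F q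
        = (fun x => (2 * γ * deriv (deriv U) x - γ ^ 3) * E x) q.1
          * (fun v => v ^ 2 * G v) q.2 by
        simp only [hF_def]; rw [hp q]; ring))]
    rw [Measure.volume_eq_prod]
    exact integral_prod_mul (fun x => (2 * γ * deriv (deriv U) x - γ ^ 3) * E x)
      (fun v => v ^ 2 * G v)
  have hmom : ∫ v, v ^ 2 * G v = kT * ∫ v, G v := by
    simp only [hG_def]
    rw [gauss_second_moment hb]
    congr 1
    field_simp
  have hsplit1 : ∫ x, (2 * γ * deriv (deriv U) x - γ ^ 3) * E x
      = 2 * γ * (∫ x, deriv (deriv U) x * E x) - γ ^ 3 * ∫ x, E x := by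
    rw [integral_congr_ae (Filter.Eventually.of_forall (fun x : ℝ =>
      show (2 * γ * deriv (deriv U) x - γ ^ 3) * E x
        = 2 * γ * (deriv (deriv U) x * E x) - γ ^ 3 * E x by ring))]
    rw [integral_sub (hUEint.const_mul _) (hEint.const_mul _),
      integral_const_mul, integral_const_mul]
  have hJsplit : ∫ q : ℝ × ℝ, deriv (deriv U) q.1 * p q
      = (∫ x, deriv (deriv U) x * E x) * ∫ v, G v := by
    rw [integral_congr_ae (Filter.Eventually.of_forall
      (fun q : ℝ × ℝ => show deriv (deriv U) q.1 * p q
        = (fun x => deriv (deriv U) x * E x) q.1 * G q.2 by rw [hp q]; ring))]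
    rw [Measure.volume_eq_prod]
    exact integral_prod_mul (fun x => deriv (deriv U) x * E x) G
  have hone : (∫ x, E x) * ∫ v, G v = 1 := by
    have hpm : ∫ q : ℝ × ℝ, p q = (∫ x, E x) * ∫ v, G v := by
      rw [integral_congr_ae (Filter.Eventually.of_forall hp)]
      rw [Measure.volume_eq_prod]
      exact integral_prod_mul E G
    have hp1 : ∫ q : ℝ × ℝ, p q = 1 := by
      show ∫ q : ℝ × ℝ, Z⁻¹ * Real.exp (-(U q.1 + q.2 ^ 2 / 2) / kT) = 1
      rw [integral_const_mul, hZ, inv_mul_cancel₀ hZpos.ne']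
    rw [← hpm, hp1]
  -- conclude
  show (∫ q : ℝ × ℝ, g q) / kT = 2 * γ * (∫ q : ℝ × ℝ, deriv^[2] U q.1 * p q) - γ ^ 3
  rw [hit2, hIg, hF2, hmom, hsplit1, hJsplit]
  have hkT' : kT ≠ 0 := hkT.ne'
  field_simp
  linear_combination (-γ ^ 2) * hone
end
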